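/- The range of the homomorphism f : B₄ → G equals the subgroup of G generated by the two elements w₂ and vw₃. -/
import Mathlib


/-- The braid relations for the braid group B₄ on four strands (generators σ₀, σ₁, σ₂). -/
def braidRels : Set (FreeGroup (Fin 3)) :=
  {FreeGroup.of 0 * FreeGroup.of 1 * FreeGroup.of 0 *
     (FreeGroup.of 1 * FreeGroup.of 0 * FreeGroup.of 1)⁻¹,
   FreeGroup.of 1 * FreeGroup.of 2 * FreeGroup.of 1 *
     (FreeGroup.of 2 * FreeGroup.of 1 * FreeGroup.of 2)⁻¹,
   FreeGroup.of 0 * FreeGroup.of 2 * (FreeGroup.of 2 * FreeGroup.of 0)⁻¹}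

/-- The braid group on four strands. -/
abbrev B4 : Type := PresentedGroup braidRels

/-- The standard generators σ₀, σ₁, σ₂ of B₄. -/
def σ (i : Fin 3) : B4 := PresentedGroup.of i

/-- The relations for the group G with generators v (index 0), w₂ (index 1), w₃ (index 2):
v² = w₂⁴ = w₃² = 1, w₃⁻¹w₂w₃ = w₂⁻¹, (vw₃w₂³)³ = 1, (vw₃vw₂²)² = 1. -/
def GRels : Set (FreeGroup (Fin 3)) :=
  {FreeGroup.of 0 ^ 2, FreeGroup.of 1 ^ 4, FreeGroup.of 2 ^ 2,
   (FreeGroup.of 2)⁻¹ * FreeGroup.of 1 * FreeGroup.of 2 * FreeGroup.of 1,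
   (FreeGroup.of 0 * FreeGroup.of 2 * FreeGroup.of 1 ^ 3) ^ 3,
   (FreeGroup.of 0 * FreeGroup.of 2 * FreeGroup.of 0 * FreeGroup.of 1 ^ 2) ^ 2}

/-- The group G. -/
abbrev GGrp : Type := PresentedGroup GRels

/-- The generator v of G. -/
def gv : GGrp := PresentedGroup.of 0

/-- The generator w₂ of G. -/
def gw2 : GGrp := PresentedGroup.of 1

/-- The generator w₃ of G. -/
def gw3 : GGrp := PresentedGroup.of 2

lemma grel_eq_one {r : FreeGroup (Fin 3)} (h : r ∈ GRels) :
    PresentedGroup.mk GRels r = 1 :=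
  (QuotientGroup.eq_one_iff r).mpr (Subgroup.subset_normalClosure h)

lemma gw2_pow_four : gw2 ^ 4 = 1 := by
  have h : PresentedGroup.mk GRels (FreeGroup.of 1 ^ 4) = 1 :=
    grel_eq_one (by simp [GRels])
  simpa [gw2, PresentedGroup.of, map_pow] using h

lemma grel5 : (gv * gw3 * gw2 ^ 3) ^ 3 = 1 := by
  have h : PresentedGroup.mk GRels
      ((FreeGroup.of 0 * FreeGroup.of 2 * FreeGroup.of 1 ^ 3) ^ 3) = 1 :=
    grel_eq_one (by simp [GRels])
  simpa [gv, gw2, gw3, PresentedGroup.of, map_pow, map_mul] using h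

lemma key_w2 :
    (gv * gw3 * gw2 ^ 2) * (gw2 * gv * gw3 * gw2) * (gw2 ^ 2 * gv * gw3) = gw2 := by
  have e : (gv * gw3 * gw2 ^ 2) * (gw2 * gv * gw3 * gw2) * (gw2 ^ 2 * gv * gw3)
      = (gv * gw3 * gw2 ^ 3) ^ 3 * (gw2 ^ 4)⁻¹ * gw2 := by
    rw [pow_succ (gv * gw3 * gw2 ^ 3), pow_succ (gv * gw3 * gw2 ^ 3), pow_one]
    group
  rw [e, grel5, gw2_pow_four, inv_one, one_mul, one_mul]

/-- The range of the homomorphism f : B₄ → G (determined by f(σ₀⁻¹) = w₂²vw₃,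
f(σ₁⁻¹) = w₂vw₃w₂, f(σ₂⁻¹) = vw₃w₂²) equals the subgroup generated by w₂ and vw₃. -/
theorem range_f :
    ∀ f : B4 →* GGrp,
      f (σ 0) = (gw2 ^ 2 * gv * gw3)⁻¹ →
      f (σ 1) = (gw2 * gv * gw3 * gw2)⁻¹ →
      f (σ 2) = (gv * gw3 * gw2 ^ 2)⁻¹ →
      f.range = Subgroup.closure {gw2, gv * gw3} := by
  intro f h0 h1 h2
  apply le_antisymm
  · rintro x ⟨y, rfl⟩
    refine PresentedGroup.generated_by braidRels
      ((Subgroup.closure {gw2, gv * gw3}).comap f) (fun j => ?_) y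
    have hw2 : gw2 ∈ Subgroup.closure {gw2, gv * gw3} :=
      Subgroup.subset_closure (Set.mem_insert _ _)
    have hvw3 : gv * gw3 ∈ Subgroup.closure {gw2, gv * gw3} :=
      Subgroup.subset_closure (Set.mem_insert_iff.mpr (Or.inr rfl))
    have e0 : ∀ i, (PresentedGroup.of i : B4) = σ i := fun _ => rfl
    have m0 : f (σ 0) ∈ Subgroup.closure {gw2, gv * gw3} := by
      rw [h0, mul_assoc]
      exact inv_mem (mul_mem (pow_mem hw2 2) hvw3)
    have m1 : f (σ 1) ∈ Subgroup.closure {gw2, gv * gw3} := by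
      rw [h1, mul_assoc gw2 gv gw3]
      exact inv_mem (mul_mem (mul_mem hw2 hvw3) hw2)
    have m2 : f (σ 2) ∈ Subgroup.closure {gw2, gv * gw3} := by
      rw [h2]
      exact inv_mem (mul_mem hvw3 (pow_mem hw2 2))
    refine Subgroup.mem_comap.mpr ?_
    fin_cases j
    · exact m0
    · exact m1
    · exact m2
  · have hw2mem : gw2 ∈ f.range := by
      refine ⟨(σ 2)⁻¹ * (σ 1)⁻¹ * (σ 0)⁻¹, ?_⟩
      rw [map_mul, map_mul, map_inv, map_inv, map_inv, h0, h1, h2,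
        inv_inv, inv_inv, inv_inv]
      exact key_w2
    have hvw3mem : gv * gw3 ∈ f.range := by
      have h : gv * gw3 = (gv * gw3 * gw2 ^ 2) * (gw2 ^ 2)⁻¹ := by group
      rw [h]
      exact mul_mem ⟨(σ 2)⁻¹, by rw [map_inv, h2, inv_inv]⟩
        (inv_mem (pow_mem hw2mem 2))
    rw [Subgroup.closure_le]
    rintro x (rfl | rfl)
    · exact hw2mem
    · exact hvw3mem
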